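/- arXiv:1912.05348 — 8 statements merged into one kernel-verified Lean document; each statement's English description precedes it below -/
import Mathlib

section
/- For every nonzero rational number r, the real number sin r is irrational. -/
/-!
If `sin r = k / q` with `r = a / b`, then `z = exp (r * I)` satisfies `q z² - 2 I k z = q`: a
relation `∑ cᵢ exp ρᵢ = m` with Gaussian integers `cᵢ`, a nonzero integer `m` and nonzero
exponents `ρᵢ ∈ b⁻¹ ℤ[i]`. Hermite's approximation (`LindemannWeierstrass.exp_polynomial_approx`,
for an integer polynomial `f` vanishing at the `ρᵢ`) gives, for every large prime `p`, an integer
`n` prime to `p` and an integer polynomial `g` of degree `< p · deg f` with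
`‖n exp ρᵢ - p g(ρᵢ)‖ ≤ c ^ p / (p - 1)!`. Summing with the weights `cᵢ`, the number
`b ^ (p · deg f) (n m - p ∑ cᵢ g(ρᵢ))` is a Gaussian integer congruent to the integer
`n m b ^ (p · deg f) ≢ 0` modulo `p`, so it has absolute value at least `1`, yet it is
`O(C ^ p / (p - 1)!)`.
-/

open Polynomial Complex Filter
open scoped Nat

lemma tendsto_pow_div_factorial_sub_one_atTop (x : ℝ) :
    Tendsto (fun n : ℕ => x ^ n / (n - 1)!) atTop (nhds 0) := by
  have h := ((FloorSemiring.tendsto_pow_div_factorial_atTop x).comp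
    (tendsto_sub_atTop_nat 1)).const_mul x
  rw [mul_zero] at h
  refine h.congr' ((eventually_ge_atTop 1).mono fun n hn => ?_)
  simp only [Function.comp_apply]
  rw [← mul_div_assoc, ← pow_succ', Nat.sub_add_cancel hn]

namespace GaussianInt

lemma aeval_div_quadratic (w : GaussianInt) {b : ℕ} (hb : b ≠ 0) :
    aeval ((w : ℂ) / b) (C ((b : ℤ) ^ 2) * X ^ 2 - C (2 * b * w.re) * X + C w.norm) = 0 := by
  have hb' : (b : ℂ) ≠ 0 := Nat.cast_ne_zero.2 hb
  simp only [map_add, map_sub, map_mul, aeval_C, aeval_X, map_pow, algebraMap_int_eq,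
    Int.coe_castRingHom, toComplex_def, Zsqrtd.norm_def]
  push_cast
  field_simp
  linear_combination ((w.im : ℂ) ^ 2) * I_sq

lemma exists_intPoly_div_mem_aroots {ι : Type*} [Fintype ι] (w : ι → GaussianInt)
    (hw : ∀ i, w i ≠ 0) {b : ℕ} (hb : b ≠ 0) :
    ∃ f : ℤ[X], f.eval 0 ≠ 0 ∧ ∀ i, (w i : ℂ) / b ∈ f.aroots ℂ := by
  set f : ℤ[X] := ∏ i, (C ((b : ℤ) ^ 2) * X ^ 2 - C (2 * b * (w i).re) * X + C (w i).norm)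
  have hf0 : f.eval 0 ≠ 0 := by
    simp only [f, eval_prod, eval_add, eval_sub, eval_mul, eval_C, eval_X]
    simpa using Finset.prod_ne_zero_iff.2 fun i _ => norm_eq_zero.not.2 (hw i)
  refine ⟨f, hf0, fun i => mem_aroots.2 ⟨fun h => hf0 (by rw [h, eval_zero]), ?_⟩⟩
  rw [map_prod]
  exact Finset.prod_eq_zero (Finset.mem_univ i) (aeval_div_quadratic (w i) hb)

lemma one_le_norm_toComplex {z : GaussianInt} (hz : z ≠ 0) : 1 ≤ ‖(z : ℂ)‖ := by
  have h : (1 : ℝ) ≤ ‖(z : ℂ)‖ ^ 2 := by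
    rw [Complex.sq_norm, ← intCast_real_norm]
    exact_mod_cast norm_pos.2 hz
  nlinarith [_root_.norm_nonneg (z : ℂ)]

lemma exists_eq_pow_mul_aeval_div (g : ℤ[X]) {d : ℕ} (hd : g.natDegree ≤ d) (w : GaussianInt)
    {b : ℕ} (hb : b ≠ 0) :
    ∃ G : GaussianInt, (b : ℂ) ^ d * aeval ((w : ℂ) / b) g = G := by
  refine ⟨∑ k ∈ Finset.range (d + 1), g.coeff k * (b : GaussianInt) ^ (d - k) * w ^ k, ?_⟩
  have hb' : (b : ℂ) ≠ 0 := Nat.cast_ne_zero.2 hb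
  rw [aeval_eq_sum_range' (Nat.lt_succ_of_le hd), Finset.mul_sum, map_sum]
  refine Finset.sum_congr rfl fun k hk => ?_
  have hk : k ≤ d := Nat.lt_succ_iff.1 (Finset.mem_range.1 hk)
  rw [zsmul_eq_mul, div_pow, ← Nat.sub_add_cancel hk]
  simp only [map_mul, map_pow, map_intCast, map_natCast, Nat.add_sub_cancel]
  field_simp
  ring

lemma intCast_sub_mul_ne_zero {a p : ℤ} (h : ¬p ∣ a) (z : GaussianInt) :
    (a : GaussianInt) - p * z ≠ 0 := fun h0 =>
  h ((Zsqrtd.intCast_dvd_intCast p a).1 ⟨z, sub_eq_zero.1 h0⟩)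

theorem sum_mul_exp_div_ne_intCast {ι : Type*} [Fintype ι] {b : ℕ} (hb : b ≠ 0)
    (w c : ι → GaussianInt) (hw : ∀ i, w i ≠ 0) {m : ℤ} (hm : m ≠ 0) :
    ∑ i, (c i : ℂ) * exp ((w i : ℂ) / b) ≠ m := by
  intro hrel
  obtain ⟨f, hf0, hroots⟩ := exists_intPoly_div_mem_aroots w hw hb
  obtain ⟨K, hK⟩ := LindemannWeierstrass.exp_polynomial_approx f hf0
  set S := ∑ i, ‖(c i : ℂ)‖
  set B : ℝ := b ^ f.natDegree * K
  have hsmall : ∀ᶠ P in atTop, S * (B ^ P / (P - 1)!) < 1 := by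
    refine ((tendsto_pow_div_factorial_sub_one_atTop B).const_mul S).eventually_lt_const ?_
    rw [mul_zero]
    exact one_pos
  obtain ⟨P, ⟨⟨⟨hPsmall, hPf⟩, hPb⟩, hPm⟩, hP⟩ := ((((hsmall.and
    (eventually_gt_atTop (f.eval 0).natAbs)).and (eventually_gt_atTop b)).and
    (eventually_gt_atTop m.natAbs)).and_frequently
    (Nat.frequently_atTop_iff_infinite.2 Nat.infinite_setOfPred_prime)).exists
  obtain ⟨n, hn, g, hg, happrox⟩ := hK P hPf hP
  set d := P * f.natDegree
  choose G hG using fun i => exists_eq_pow_mul_aeval_div g (hg.trans (Nat.sub_le _ _)) (w i) hb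
  set M : GaussianInt := ((n * m * b ^ d : ℤ) : GaussianInt) - (P : ℤ) * ∑ i, c i * G i
  have hM : (M : ℂ) = b ^ d * ∑ i, c i * (n • exp (w i / b) - P • aeval ((w i : ℂ) / b) g) := by
    simp only [M, zsmul_eq_mul, nsmul_eq_mul, mul_sub, Finset.sum_sub_distrib, map_sub, map_mul,
      map_intCast, map_sum, ← hG]
    have hsum : ∑ i, (c i : ℂ) * (n * exp (w i / b)) = n * m := by
      rw [← hrel, Finset.mul_sum]
      exact Finset.sum_congr rfl fun i _ => by ring
    rw [hsum, Finset.mul_sum, Finset.mul_sum]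
    push_cast
    congr 1
    · ring
    · exact Finset.sum_congr rfl fun i _ => by ring
  have hM0 : M ≠ 0 := by
    refine intCast_sub_mul_ne_zero ?_ _
    have hPi : Prime (P : ℤ) := Nat.prime_iff_prime_int.1 hP
    have hPm' : ¬(P : ℤ) ∣ m := fun h =>
      (Nat.le_of_dvd (Int.natAbs_pos.2 hm) (Int.natCast_dvd.1 h)).not_gt hPm
    have hPb' : ¬(P : ℤ) ∣ b := fun h =>
      (Nat.le_of_dvd (Nat.pos_of_ne_zero hb) (Int.natCast_dvd_natCast.1 h)).not_gt hPb
    intro h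
    rcases hPi.dvd_or_dvd h with h | h
    · rcases hPi.dvd_or_dvd h with h | h
      exacts [hn h, hPm' h]
    · exact hPb' (hPi.dvd_of_dvd_pow h)
  have hupper : ‖(M : ℂ)‖ ≤ S * (B ^ P / (P - 1)!) := by
    calc ‖(M : ℂ)‖ = b ^ d * ‖∑ i, c i * (n • exp (w i / b) - P • aeval ((w i : ℂ) / b) g)‖ := by
          rw [hM, norm_mul, norm_pow, Complex.norm_natCast]
      _ ≤ b ^ d * (S * (K ^ P / (P - 1)!)) := by
          gcongr
          refine (norm_sum_le _ _).trans ?_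
          rw [Finset.sum_mul]
          gcongr with i
          rw [norm_mul]
          gcongr
          exact happrox (hroots i)
      _ = S * (B ^ P / (P - 1)!) := by
          rw [mul_pow, ← pow_mul']
          ring
  linarith [one_le_norm_toComplex hM0]

end GaussianInt

lemma Complex.exp_two_mul_mul_I_sub (x : ℂ) :
    exp (2 * x * I) - 2 * I * sin x * exp (x * I) = 1 := by
  rw [Complex.sin, show 2 * x * I = x * I + x * I by ring, Complex.exp_add]
  have h : exp (-x * I) * exp (x * I) = 1 := by rw [← Complex.exp_add]; simp
  linear_combination h + (exp (x * I) ^ 2 - exp (x * I) * exp (-x * I)) * I_sq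

theorem sin_rat_irrational (r : ℚ) (hr : r ≠ 0) :
    Irrational (Real.sin (r : ℝ)) := by
  rintro ⟨s, hs⟩
  have hnum : r.num ≠ 0 := Rat.num_ne_zero.2 hr
  have hdiv (k : ℤ) : ((⟨0, k * r.num⟩ : GaussianInt) : ℂ) / r.den = k * r * I := by
    rw [GaussianInt.toComplex_def', Rat.cast_def]
    push_cast
    ring
  have hsin : (s.den : ℂ) * sin r = s.num := by
    rw [← Complex.ofReal_ratCast, ← Complex.ofReal_sin, ← hs, Complex.ofReal_ratCast, Rat.cast_def]
    field_simp
  refine GaussianInt.sum_mul_exp_div_ne_intCast r.den_nz ![⟨0, 1 * r.num⟩, ⟨0, 2 * r.num⟩]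
    ![⟨0, -2 * s.num⟩, s.den] ?_ (m := s.den) (by exact_mod_cast s.den_nz) ?_
  · simp [Fin.forall_fin_two, Zsqrtd.ext_iff, hnum]
  · simp only [Fin.sum_univ_two, Matrix.cons_val_zero, Matrix.cons_val_one, hdiv]
    rw [GaussianInt.toComplex_def', map_natCast]
    push_cast
    rw [one_mul]
    linear_combination (s.den : ℂ) * Complex.exp_two_mul_mul_I_sub r + 2 * I * exp (r * I) * hsin
end

section
/- For every nonzero rational number r, the real number tan r is irrational. -/
/-!
For `s` rational with denominator `b`, the Hermite–Niven integrals
`Iₙ(s) = ∫₀ˢ (x (s - x))ⁿ / n! · sin x dx` satisfy `I₀ = 1 - cos s`,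
`I₁ = 2 (1 - cos s) - s sin s` and `Iₙ₊₂ = (4n + 6) Iₙ₊₁ - s² Iₙ`, so `bⁿ Iₙ` is an integer
combination of `1 - cos s` and `sin s`. If `tan r = p / q`, then for `s = 2r` both of these are
integer multiples of `sin s / q`, hence so is every `bⁿ Iₙ`. Since `bⁿ Iₙ → 0`, eventually
`bⁿ Iₙ = 0`; running the recurrence backwards (its last coefficient `(b s)²` is a nonzero integer)
gives `1 - cos 2r = 2 sin² r = 0`, which is impossible because `π` is irrational.
-/

open Real Filter Topology intervalIntegral AddSubgroup
open scoped Nat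

section Recurrence

variable {G : Type*} [AddCommGroup G] {u : ℕ → G} {e : ℕ → ℤ} {d : ℤ}

theorem mem_of_recurrence {S : AddSubgroup G} (hu : ∀ n, u (n + 2) = e n • u (n + 1) - d • u n)
    (h0 : u 0 ∈ S) (h1 : u 1 ∈ S) : ∀ n, u n ∈ S
  | 0 => h0
  | 1 => h1
  | n + 2 => hu n ▸ S.sub_mem (S.zsmul_mem (mem_of_recurrence hu h0 h1 (n + 1)) _)
      (S.zsmul_mem (mem_of_recurrence hu h0 h1 n) _)

theorem eq_zero_of_recurrence_of_eventually_eq_zero [IsAddTorsionFree G]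
    (hu : ∀ n, u (n + 2) = e n • u (n + 1) - d • u n) (hd : d ≠ 0)
    (hzero : ∀ᶠ n in atTop, u n = 0) : ∀ n, u n = 0 := by
  obtain ⟨N, hN⟩ := eventually_atTop.mp hzero
  induction N with
  | zero => exact fun n => hN n n.zero_le
  | succ N ih =>
    refine ih fun n hn => ?_
    rcases hn.eq_or_lt with rfl | hn
    · have h := hu N
      rw [hN (N + 2) (by omega), hN (N + 1) le_rfl, smul_zero, zero_sub, zero_eq_neg] at h
      exact zsmul_right_injective hd (h.trans (smul_zero d).symm)
    · exact hN n hn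

end Recurrence

theorem eventually_eq_zero_of_tendsto_of_mem_zmultiples {u : ℕ → ℝ} {c : ℝ}
    (hmem : ∀ n, u n ∈ zmultiples c) (hu : Tendsto u atTop (𝓝 0)) : ∀ᶠ n in atTop, u n = 0 := by
  rcases eq_or_ne c 0 with rfl | hc
  · exact .of_forall fun n => by simpa using hmem n
  filter_upwards [(tendsto_norm_zero.comp hu).eventually (gt_mem_nhds (norm_pos_iff.2 hc))]
    with n hn
  obtain ⟨k, hk⟩ := mem_zmultiples_iff.mp (hmem n)
  rw [Function.comp_apply, ← hk, zsmul_eq_mul, norm_mul, Real.norm_eq_abs (k : ℝ),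
    ← Int.cast_abs] at hn
  have : |k| < 1 := by exact_mod_cast (mul_lt_iff_lt_one_left (norm_pos_iff.2 hc)).mp hn
  rw [← hk, Int.abs_lt_one_iff.mp this, zero_smul]

theorem integral_add_deriv_deriv_mul_sin {f f' f'' : ℝ → ℝ} (a b : ℝ)
    (hf : ∀ x, HasDerivAt f (f' x) x) (hf' : ∀ x, HasDerivAt f' (f'' x) x)
    (hf'' : Continuous f'') :
    ∫ x in a..b, (f x + f'' x) * sin x
      = (f' b * sin b - f b * cos b) - (f' a * sin a - f a * cos a) := by
  have hfc : Continuous f := continuous_iff_continuousAt.2 fun x => (hf x).continuousAt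
  have hint : IntervalIntegrable (fun x => (f x + f'' x) * sin x) MeasureTheory.volume a b :=
    Continuous.intervalIntegrable (by fun_prop) a b
  refine integral_eq_sub_of_hasDerivAt (f := fun x => f' x * sin x - f x * cos x)
    (fun x _ => ?_) hint
  exact (((hf' x).fun_mul (hasDerivAt_sin x)).fun_sub
    ((hf x).fun_mul (hasDerivAt_cos x))).congr_deriv (by ring)

noncomputable def nivenWeight (s : ℝ) (n : ℕ) (x : ℝ) : ℝ := (x * (s - x)) ^ n / n !

noncomputable def nivenIntegral (s : ℝ) (n : ℕ) : ℝ := ∫ x in (0 : ℝ)..s, nivenWeight s n x * sin x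

section Niven

variable (s : ℝ)

@[fun_prop]
theorem continuous_nivenWeight (n : ℕ) : Continuous (nivenWeight s n) := by
  unfold nivenWeight; fun_prop

theorem nivenWeight_zero : nivenWeight s 0 = 1 := by
  ext; simp [nivenWeight]

theorem nivenWeight_succ_apply_zero (n : ℕ) : nivenWeight s (n + 1) 0 = 0 := by
  simp [nivenWeight]

theorem nivenWeight_succ_apply_self (n : ℕ) : nivenWeight s (n + 1) s = 0 := by
  simp [nivenWeight]

theorem hasDerivAt_nivenWeight (n : ℕ) (x : ℝ) :
    HasDerivAt (nivenWeight s (n + 1)) (nivenWeight s n x * (s - 2 * x)) x := by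
  have hw : HasDerivAt (fun x => x * (s - x)) (s - 2 * x) x :=
    ((hasDerivAt_id' x).fun_mul ((hasDerivAt_id' x).const_sub s)).congr_deriv (by ring)
  refine ((hw.fun_pow (n + 1)).div_const ((n + 1)! : ℝ)).congr_deriv ?_
  rw [nivenWeight, Nat.factorial_succ, Nat.add_sub_cancel]
  push_cast
  field_simp

/-- Because `(s - 2x)² = s² - 4 x (s - x)`, the second derivative of a weight is again a combination
of weights. -/
theorem hasDerivAt_nivenWeight_mul (n : ℕ) (x : ℝ) :
    HasDerivAt (fun x => nivenWeight s (n + 1) x * (s - 2 * x))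
      (s ^ 2 * nivenWeight s n x - (4 * n + 6) * nivenWeight s (n + 1) x) x := by
  refine ((hasDerivAt_nivenWeight s n x).fun_mul
    (((hasDerivAt_id' x).const_mul 2).const_sub s)).congr_deriv ?_
  simp only [nivenWeight, Nat.factorial_succ]
  push_cast
  field_simp
  ring

theorem nivenIntegral_zero : nivenIntegral s 0 = 1 - cos s := by
  simp [nivenIntegral, nivenWeight_zero, integral_sin]

theorem nivenIntegral_one : nivenIntegral s 1 = 2 * (1 - cos s) - s * sin s := by
  have h := integral_add_deriv_deriv_mul_sin 0 s (hasDerivAt_nivenWeight s 0)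
    (fun x => by simpa [nivenWeight_zero] using ((hasDerivAt_id x).const_mul 2).const_sub s)
    continuous_const
  have hsplit : ∫ x in (0 : ℝ)..s, (nivenWeight s 1 x + -2) * sin x
      = nivenIntegral s 1 - 2 * (1 - cos s) := by
    simp only [add_mul, neg_mul]
    rw [integral_add, integral_neg, integral_const_mul, integral_sin]
    · simp only [nivenIntegral, cos_zero]; ring
    all_goals exact Continuous.intervalIntegrable (by fun_prop) _ _
  simp only [zero_add, nivenWeight_zero, Pi.one_apply, one_mul, nivenWeight_succ_apply_self,
    zero_mul, sub_zero, mul_zero, sin_zero, nivenWeight_succ_apply_zero, cos_zero, mul_one,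
    sub_self] at h
  linarith

theorem nivenIntegral_add_two (n : ℕ) :
    nivenIntegral s (n + 2)
      = (4 * n + 6) * nivenIntegral s (n + 1) - s ^ 2 * nivenIntegral s n := by
  have h := integral_add_deriv_deriv_mul_sin 0 s (hasDerivAt_nivenWeight s (n + 1))
    (hasDerivAt_nivenWeight_mul s n) (by fun_prop)
  simp only [nivenWeight_succ_apply_zero, nivenWeight_succ_apply_self, zero_mul, sub_self] at h
  have hsplit : ∀ x, (nivenWeight s (n + 2) x
      + (s ^ 2 * nivenWeight s n x - (4 * n + 6) * nivenWeight s (n + 1) x)) * sin x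
      = nivenWeight s (n + 2) x * sin x + (s ^ 2 * (nivenWeight s n x * sin x)
        - (4 * n + 6) * (nivenWeight s (n + 1) x * sin x)) := fun x => by ring
  rw [← sub_eq_zero, ← h]
  simp only [hsplit]
  rw [integral_add, integral_sub, integral_const_mul, integral_const_mul]
  · simp only [nivenIntegral]; ring
  all_goals exact Continuous.intervalIntegrable (by fun_prop) _ _

theorem abs_nivenIntegral_le (n : ℕ) : |nivenIntegral s n| ≤ (s ^ 2) ^ n / n ! * |s| := by
  have hbound : ∀ x ∈ Set.uIoc 0 s, ‖nivenWeight s n x * sin x‖ ≤ (s ^ 2) ^ n / n ! := by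
    intro x hx
    have hw : |x * (s - x)| ≤ s ^ 2 := by
      rcases Set.mem_uIoc.mp hx with ⟨h0, hs⟩ | ⟨h0, hs⟩ <;>
        rw [abs_le] <;> constructor <;> nlinarith
    rw [norm_mul, Real.norm_eq_abs, nivenWeight, abs_div, abs_pow, Nat.abs_cast]
    calc |x * (s - x)| ^ n / n ! * ‖sin x‖ ≤ (s ^ 2) ^ n / n ! * 1 := by
          gcongr
          exact abs_sin_le_one x
      _ = _ := mul_one _
  simpa [nivenIntegral] using norm_integral_le_of_norm_le_const hbound

theorem tendsto_pow_mul_nivenIntegral (t : ℝ) :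
    Tendsto (fun n => t ^ n * nivenIntegral s n) atTop (𝓝 0) := by
  refine squeeze_zero_norm (a := fun n => (|t| * s ^ 2) ^ n / n ! * |s|) (fun n => ?_) ?_
  · rw [norm_mul, norm_pow, Real.norm_eq_abs, Real.norm_eq_abs, mul_pow, mul_div_assoc,
      mul_assoc]
    gcongr
    exact abs_nivenIntegral_le s n
  · simpa using (FloorSemiring.tendsto_pow_div_factorial_atTop (|t| * s ^ 2)).mul_const |s|

end Niven

theorem cos_ratCast_eq_one_of_mem_zmultiples (s : ℚ) {c : ℝ} (h₁ : 1 - cos s ∈ zmultiples c)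
    (h₂ : sin s ∈ zmultiples c) : cos s = 1 := by
  rcases eq_or_ne s 0 with rfl | hs
  · simp
  have ha : s.num ^ 2 ≠ 0 := pow_ne_zero 2 (Rat.num_ne_zero.mpr hs)
  have hab : (s.den : ℝ) * s = s.num := by
    rw [Rat.cast_def]; field_simp
  set v : ℕ → ℝ := fun n => (s.den : ℝ) ^ n * nivenIntegral s n with hv
  have hrec : ∀ n, v (n + 2) = ((4 * n + 6) * s.den : ℤ) • v (n + 1) - (s.num ^ 2) • v n := by
    intro n
    simp only [hv, zsmul_eq_mul, nivenIntegral_add_two]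
    push_cast
    rw [← hab]
    ring
  have hv₀ : v 0 = 1 - cos s := by simp [hv, nivenIntegral_zero]
  have hv₁ : v 1 = (2 * s.den : ℤ) • (1 - cos s) - s.num • sin s := by
    simp only [hv, zsmul_eq_mul, nivenIntegral_one]
    push_cast
    rw [← hab]
    ring
  have hmem := mem_of_recurrence hrec (hv₀ ▸ h₁) (hv₁ ▸ sub_mem (zsmul_mem h₁ _) (zsmul_mem h₂ _))
  have hzero := eq_zero_of_recurrence_of_eventually_eq_zero hrec ha
    (eventually_eq_zero_of_tendsto_of_mem_zmultiples hmem (tendsto_pow_mul_nivenIntegral s s.den))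
  linarith [hzero 0, hv₀]

theorem sin_ratCast_ne_zero {q : ℚ} (hq : q ≠ 0) : sin q ≠ 0 := by
  rw [Ne, sin_eq_zero_iff]
  rintro ⟨k, hk⟩
  have hk₀ : k ≠ 0 := by rintro rfl; exact hq (by simpa using hk.symm)
  exact irrational_pi ⟨q / k, by push_cast; rw [← hk]; field_simp⟩

theorem tan_rat_irrational (r : ℚ) (hr : r ≠ 0) :
    Irrational (Real.tan (r : ℝ)) := by
  rintro ⟨t, ht⟩
  have hsin : sin r ≠ 0 := sin_ratCast_ne_zero hr
  have hcos : cos r ≠ 0 := by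
    have := sin_ratCast_ne_zero (mul_ne_zero two_ne_zero hr)
    push_cast at this
    rw [sin_two_mul] at this
    exact right_ne_zero_of_mul this
  have htnum : (t.num : ℝ) = tan r * t.den := by
    rw [← ht, Rat.cast_def]; field_simp
  set c := 2 * sin r * cos r / t.den with hc
  have h₁ : 1 - cos ((2 * r : ℚ) : ℝ) = t.num • c := by
    rw [zsmul_eq_mul, hc, htnum, tan_eq_sin_div_cos]
    push_cast
    rw [cos_two_mul, cos_sq']
    field_simp
    ring
  have h₂ : sin ((2 * r : ℚ) : ℝ) = (t.den : ℤ) • c := by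
    rw [zsmul_eq_mul, hc]
    push_cast
    rw [sin_two_mul]
    field_simp
  have := cos_ratCast_eq_one_of_mem_zmultiples (2 * r) ⟨_, h₁.symm⟩ ⟨_, h₂.symm⟩
  push_cast at this
  rw [cos_two_mul, cos_sq'] at this
  exact hsin (by nlinarith)
end

section
/- Let f be a polynomial with real coefficients whose degree is at most 2N for some natural number N, and define the polynomial F = Σ_{k=0}^{N} (−1)^k · f^{(2k)}, where f^{(2k)} denotes the (2k)-th derivative of f. Then for every real number a, ∫_0^a f(x) · sin(a − x) dx = F(a) − F(0)·cos a − F'(0)·sin a. -/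
/-!
The sum `F = ∑ (-1)^k f^{(2k)}` telescopes under `F ↦ F'' + F` to `f`, because `f^{(2N+2)} = 0`.
For any `F`, the function `F' (x) sin (a - x) + F (x) cos (a - x)` has derivative
`(F'' + F)(x) sin (a - x)`, so the integral is read off at the endpoints `x = a` and `x = 0`.
-/

open Polynomial

namespace Polynomial

variable {R : Type*} [Ring R]

lemma derivative_derivative_smul_iterate_derivative (f : R[X]) (k : ℕ) :
    derivative (derivative ((-1 : R) ^ k • derivative^[2 * k] f)) =
      -((-1 : R) ^ (k + 1) • derivative^[2 * (k + 1)] f) := by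
  rw [derivative_smul, derivative_smul, pow_succ, mul_neg_one, neg_smul, neg_neg,
    show 2 * (k + 1) = 2 * k + 1 + 1 by ring, Function.iterate_succ_apply',
    Function.iterate_succ_apply']

theorem derivative_derivative_add_alternating_sum {N : ℕ} {f : R[X]}
    (hf : f.natDegree ≤ 2 * N) :
    let F := ∑ k ∈ Finset.range (N + 1), (-1 : R) ^ k • derivative^[2 * k] f
    derivative (derivative F) + F = f := by
  have hvanish : derivative^[2 * (N + 1)] f = 0 := iterate_derivative_eq_zero (by omega)
  simp only [map_sum, derivative_derivative_smul_iterate_derivative, ← Finset.sum_add_distrib,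
    neg_add_eq_sub]
  rw [Finset.sum_range_sub' (fun k => (-1 : R) ^ k • derivative^[2 * k] f), hvanish]
  simp

end Polynomial

theorem intervalIntegral_add_mul_sin_sub {F F' F'' : ℝ → ℝ} {a : ℝ}
    (hF : ∀ x, HasDerivAt F (F' x) x) (hF' : ∀ x, HasDerivAt F' (F'' x) x)
    (hint : IntervalIntegrable (fun x => (F'' x + F x) * Real.sin (a - x))
      MeasureTheory.volume 0 a) :
    ∫ x in (0 : ℝ)..a, (F'' x + F x) * Real.sin (a - x) =
      F a - F 0 * Real.cos a - F' 0 * Real.sin a := by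
  have hderiv : ∀ x ∈ Set.uIcc 0 a,
      HasDerivAt (fun x => F' x * Real.sin (a - x) + F x * Real.cos (a - x))
        ((F'' x + F x) * Real.sin (a - x)) x := by
    intro x _
    have hsub := (hasDerivAt_id' x).const_sub a
    refine (((hF' x).mul hsub.sin).add ((hF x).mul hsub.cos)).congr_deriv ?_
    ring
  rw [intervalIntegral.integral_eq_sub_of_hasDerivAt hderiv hint]
  simp only [sub_self, sub_zero, Real.sin_zero, Real.cos_zero]
  ring

theorem integral_poly_mul_sin (N : ℕ) (f : ℝ[X]) (hf : f.natDegree ≤ 2 * N)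
    (F : ℝ[X])
    (hF : F = ∑ k ∈ Finset.range (N + 1), ((-1 : ℝ)) ^ k • (derivative^[2 * k] f))
    (a : ℝ) :
    ∫ x in (0 : ℝ)..a, f.eval x * Real.sin (a - x) =
      F.eval a - F.eval 0 * Real.cos a - (derivative F).eval 0 * Real.sin a := by
  have hf_eq : derivative (derivative F) + F = f :=
    hF ▸ derivative_derivative_add_alternating_sum hf
  simp_rw [← hf_eq, eval_add]
  exact intervalIntegral_add_mul_sin_sub (fun x => F.hasDerivAt x)
    (fun x => (derivative F).hasDerivAt x) ((by fun_prop : Continuous _).intervalIntegrable _ _)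
end

section
/- Let g be a polynomial with integer coefficients, let n be a natural number, and define the polynomial f(x) = xⁿ · g(x) / n! with rational (hence real) coefficients. Then: (i) for every natural number k, the value f^{(k)}(0) of the k-th derivative of f at 0 is an integer; (ii) f^{(k)}(0) = 0 for all k < n; (iii) for all k ≥ n, f^{(k)}(0) = (k! / n!) · c_{k−n}, where c_j denotes the coefficient of x^j in g. -/
open Polynomial Nat

namespace Polynomial

variable {R : Type*} [Semiring R]

theorem iterate_derivative_eval_zero (p : R[X]) (k : ℕ) :
    (derivative^[k] p).eval 0 = k ! * p.coeff k := by
  rw [← coeff_zero_eq_eval_zero, coeff_iterate_derivative, zero_add, descFactorial_self,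
    nsmul_eq_mul]

theorem coeff_C_mul_X_pow_mul (a : R) (n k : ℕ) (p : R[X]) :
    (C a * X ^ n * p).coeff k = if n ≤ k then a * p.coeff (k - n) else 0 := by
  rw [mul_assoc, coeff_C_mul, coeff_X_pow_mul', mul_ite, mul_zero]

end Polynomial

theorem deriv_at_zero_of_xpow_mul (g : ℤ[X]) (n : ℕ)
    (f : ℚ[X])
    (hf : f = C ((n.factorial : ℚ)⁻¹) * X ^ n * g.map (Int.castRingHom ℚ)) :
    (∀ k : ℕ, ∃ z : ℤ, (derivative^[k] f).eval 0 = (z : ℚ)) ∧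
    (∀ k : ℕ, k < n → (derivative^[k] f).eval 0 = 0) ∧
    (∀ k : ℕ, n ≤ k →
      (derivative^[k] f).eval 0 =
        (k.factorial : ℚ) / (n.factorial : ℚ) * (g.coeff (k - n) : ℚ)) := by
  have heval (k : ℕ) : (derivative^[k] f).eval 0 =
      if n ≤ k then (k ! : ℚ) / n ! * g.coeff (k - n) else 0 := by
    rw [iterate_derivative_eval_zero, hf, coeff_C_mul_X_pow_mul, coeff_map, eq_intCast,
      mul_ite, mul_zero, ← mul_assoc, ← div_eq_mul_inv]
  have hlow (k : ℕ) (hk : k < n) : (derivative^[k] f).eval 0 = 0 := by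
    rw [heval, if_neg (not_le.mpr hk)]
  have hhigh (k : ℕ) (hk : n ≤ k) :
      (derivative^[k] f).eval 0 = (k ! : ℚ) / n ! * g.coeff (k - n) := by
    rw [heval, if_pos hk]
  refine ⟨fun k ↦ ?_, hlow, hhigh⟩
  rcases lt_or_ge k n with hk | hk
  · exact ⟨0, by rw [hlow k hk, Int.cast_zero]⟩
  · refine ⟨(k ! / n ! : ℕ) * g.coeff (k - n), ?_⟩
    rw [hhigh k hk, Int.cast_mul, Int.cast_natCast,
      Nat.cast_div_charZero (factorial_dvd_factorial hk)]
end

section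
/- Let s, t, m, p be positive integers, set r = s/t, and define the polynomial f(x) = t^{4mp+2p−2} · x^{2p−2} · ∏_{k=1}^{m} (x² − k²r²)^{2p} / (2p−2)!. Then for every natural number j, the value f^{(j)}(0) of the j-th derivative of f at 0 is an integer, and f^{(2j+1)}(0) = 0 for every natural number j. -/
/-!
Clearing the denominators of `r = s / t` gives `f = X ^ (2p-2) * g / (2p-2)!` with `g ∈ ℤ[X]`. Since
`f^{(j)}(0) = j! * [X^j] f`, this value vanishes for `j < 2p-2` and equals `j! / (2p-2)!` times an
integer otherwise. Moreover `f` is a polynomial in `X ^ 2`, so its odd coefficients vanish.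
-/

open Polynomial

namespace Polynomial

theorem iterate_derivative_eval_zero_s14 {R : Type*} [Semiring R] (f : R[X]) (j : ℕ) :
    (derivative^[j] f).eval 0 = j.factorial • f.coeff j := by
  rw [← coeff_zero_eq_eval_zero, coeff_iterate_derivative, zero_add, Nat.descFactorial_self]

theorem iterate_derivative_expand_two_eval_zero_of_odd {R : Type*} [CommSemiring R] (g : R[X])
    (j : ℕ) : (derivative^[2 * j + 1] (expand R 2 g)).eval 0 = 0 := by
  rw [iterate_derivative_eval_zero_s14, coeff_expand two_pos, if_neg (by omega), smul_zero]

theorem exists_int_iterate_derivative_eval_zero_C_inv_factorial_mul_X_pow_mul_map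
    {K : Type*} [Field K] [CharZero K] (n : ℕ) (g : ℤ[X]) (j : ℕ) :
    ∃ z : ℤ, (derivative^[j] (C ((n.factorial : K)⁻¹) * X ^ n * g.map (Int.castRingHom K))).eval 0
      = (z : K) := by
  rw [iterate_derivative_eval_zero_s14, mul_assoc, coeff_C_mul, coeff_X_pow_mul', nsmul_eq_mul]
  split_ifs with hnj
  · obtain ⟨d, hd⟩ := Nat.factorial_dvd_factorial hnj
    refine ⟨d * g.coeff (j - n), ?_⟩
    have hn : (n.factorial : K) ≠ 0 := Nat.cast_ne_zero.mpr n.factorial_ne_zero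
    rw [coeff_map, eq_intCast, hd]
    push_cast
    field_simp
  · exact ⟨0, by simp⟩

end Polynomial

noncomputable def nivenIntPoly (s t m p : ℕ) : ℤ[X] :=
  C ((t : ℤ) ^ (2 * p - 2)) *
    ∏ k ∈ Finset.Icc 1 m, (C ((t : ℤ) ^ 2) * X ^ 2 - C ((k : ℤ) ^ 2 * s ^ 2)) ^ (2 * p)

theorem map_nivenIntPoly (s t m p : ℕ) (ht : t ≠ 0) :
    (nivenIntPoly s t m p).map (Int.castRingHom ℝ) =
      C ((t : ℝ) ^ (4 * m * p + 2 * p - 2)) *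
        ∏ k ∈ Finset.Icc 1 m, (X ^ 2 - C ((k : ℝ) ^ 2 * ((s : ℝ) / t) ^ 2)) ^ (2 * p) := by
  have hfactor (k : ℕ) :
      (C ((t : ℤ) ^ 2) * X ^ 2 - C ((k : ℤ) ^ 2 * s ^ 2)).map (Int.castRingHom ℝ) =
        C ((t : ℝ) ^ 2) * (X ^ 2 - C ((k : ℝ) ^ 2 * ((s : ℝ) / t) ^ 2)) := by
    have hk : (t : ℝ) ^ 2 * ((k : ℝ) ^ 2 * ((s : ℝ) / t) ^ 2) = k ^ 2 * s ^ 2 := by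
      field_simp
    rw [mul_sub, ← C_mul, hk]
    simp
  have hexp : 4 * m * p + 2 * p - 2 = 2 * p - 2 + 2 * (2 * p) * m := by
    -- `p = 0` separately: both sides are `0` only thanks to truncated subtraction
    rcases p with _ | p
    · simp
    · rw [show 2 * (2 * (p + 1)) * m = 4 * (m * (p + 1)) by ring,
        show 4 * m * (p + 1) = 4 * (m * (p + 1)) by ring]
      omega
  rw [nivenIntPoly, Polynomial.map_mul, Polynomial.map_prod, map_C, eq_intCast]
  simp only [Polynomial.map_pow, hfactor, mul_pow, Finset.prod_mul_distrib, Finset.prod_const,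
    Nat.card_Icc, Nat.add_sub_cancel]
  simp only [hexp, pow_add, pow_mul, C_mul, C_pow, Int.cast_pow, Int.cast_natCast]
  ring

theorem niven_poly_deriv_at_zero_general (s t m p : ℕ) (ht : 0 < t)
    (r : ℝ) (hr : r = (s : ℝ) / (t : ℝ)) (f : ℝ[X])
    (hf : f = C ((t : ℝ) ^ (4 * m * p + 2 * p - 2) / ((2 * p - 2).factorial : ℝ)) *
      X ^ (2 * p - 2) * ∏ k ∈ Finset.Icc 1 m, (X ^ 2 - C ((k : ℝ) ^ 2 * r ^ 2)) ^ (2 * p)) :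
    (∀ j : ℕ, ∃ z : ℤ, (derivative^[j] f).eval 0 = (z : ℝ)) ∧
    (∀ j : ℕ, (derivative^[2 * j + 1] f).eval 0 = 0) := by
  have hf_int : f = C (((2 * p - 2).factorial : ℝ)⁻¹) * X ^ (2 * p - 2) *
      (nivenIntPoly s t m p).map (Int.castRingHom ℝ) := by
    rw [hf, map_nivenIntPoly s t m p ht.ne', ← hr, div_eq_mul_inv, C_mul]
    ring
  have hf_even : f = expand ℝ 2 (C ((t : ℝ) ^ (4 * m * p + 2 * p - 2) /
      ((2 * p - 2).factorial : ℝ)) * X ^ (p - 1) *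
        ∏ k ∈ Finset.Icc 1 m, (X - C ((k : ℝ) ^ 2 * r ^ 2)) ^ (2 * p)) := by
    simp [hf, map_prod, ← pow_mul, Nat.mul_sub_one]
  refine ⟨fun j => ?_, fun j => ?_⟩
  · rw [hf_int]
    exact exists_int_iterate_derivative_eval_zero_C_inv_factorial_mul_X_pow_mul_map _ _ j
  · rw [hf_even]
    exact iterate_derivative_expand_two_eval_zero_of_odd _ j

theorem niven_poly_deriv_at_zero (s t m p : ℕ) (hs : 0 < s) (ht : 0 < t) (hm : 0 < m) (hp : 0 < p)
    (r : ℝ) (hr : r = (s : ℝ) / (t : ℝ)) (f : ℝ[X])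
    (hf : f = C ((t : ℝ) ^ (4 * m * p + 2 * p - 2) / ((2 * p - 2).factorial : ℝ)) *
      X ^ (2 * p - 2) * ∏ k ∈ Finset.Icc 1 m, (X ^ 2 - C ((k : ℝ) ^ 2 * r ^ 2)) ^ (2 * p)) :
    (∀ j : ℕ, ∃ z : ℤ, (derivative^[j] f).eval 0 = (z : ℝ)) ∧
    (∀ j : ℕ, (derivative^[2 * j + 1] f).eval 0 = 0) :=
  niven_poly_deriv_at_zero_general s t m p ht r hr f hf
end

section
/- Let s, t, m, p be positive integers, set r = s/t, and define the polynomial f(x) = t^{4mp+2p−2} · x^{2p−2} · ∏_{k=1}^{m} (x² − k²r²)^{2p} / (2p−2)!. Then the (2p−2)-th derivative of f at 0 satisfies f^{(2p−2)}(0) = s^{4mp} · t^{2p−2} · (m!)^{4p}. -/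
open Polynomial

namespace Polynomial

variable {R : Type*}

theorem iterate_derivative_C_mul_X_pow_mul_eval_zero [CommSemiring R] (a : R) (n : ℕ)
    (g : R[X]) : (derivative^[n] (C a * X ^ n * g)).eval 0 = n.factorial * a * g.eval 0 := by
  rw [← coeff_zero_eq_eval_zero, coeff_iterate_derivative, zero_add, Nat.descFactorial_self,
    mul_assoc, coeff_C_mul, coeff_X_pow_mul', if_pos le_rfl, Nat.sub_self,
    coeff_zero_eq_eval_zero, nsmul_eq_mul, mul_assoc]

theorem eval_zero_prod_X_sq_sub_C_pow [CommRing R] (r : R) (m p : ℕ) :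
    (∏ k ∈ Finset.Icc 1 m, (X ^ 2 - C ((k : R) ^ 2 * r ^ 2)) ^ (2 * p)).eval 0 =
      ((m.factorial : R) * r ^ m) ^ (4 * p) := by
  have hfact : ∏ k ∈ Finset.Icc 1 m, (k : R) = m.factorial := by
    induction m with
    | zero => simp
    | succ m ih =>
      rw [Finset.prod_Icc_succ_top (by omega), ih, Nat.factorial_succ]
      push_cast
      ring
  have hfactor (k : ℕ) :
      ((0 : R) ^ 2 - (k : R) ^ 2 * r ^ 2) ^ (2 * p) = ((k : R) * r) ^ (4 * p) := by
    rw [zero_pow two_ne_zero, zero_sub, (even_two_mul p).neg_pow, ← mul_pow, ← pow_mul]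
    ring_nf
  simp only [eval_prod, eval_pow, eval_sub, eval_X, eval_C, hfactor]
  rw [Finset.prod_pow, Finset.prod_mul_distrib, Finset.prod_const, Nat.card_Icc,
    Nat.add_sub_cancel, hfact]

end Polynomial

theorem niven_poly_key_deriv_general (s t m p : ℕ) (ht : 0 < t)
    (r : ℝ) (hr : r = (s : ℝ) / (t : ℝ)) (f : ℝ[X])
    (hf : f = C ((t : ℝ) ^ (4 * m * p + 2 * p - 2) / ((2 * p - 2).factorial : ℝ)) *
      X ^ (2 * p - 2) * ∏ k ∈ Finset.Icc 1 m, (X ^ 2 - C ((k : ℝ) ^ 2 * r ^ 2)) ^ (2 * p)) :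
    (derivative^[2 * p - 2] f).eval 0 =
      ((s : ℝ) ^ (4 * m * p) * (t : ℝ) ^ (2 * p - 2) * (m.factorial : ℝ) ^ (4 * p)) := by
  have ht' : (t : ℝ) ≠ 0 := by positivity
  -- for `p = 0` both sides truncate to `0`
  have hexp : 4 * m * p + 2 * p - 2 = 4 * m * p + (2 * p - 2) := by cases p <;> omega
  rw [hf, iterate_derivative_C_mul_X_pow_mul_eval_zero, eval_zero_prod_X_sq_sub_C_pow, hr, hexp,
    pow_add, mul_div_cancel₀ _ (by positivity), div_pow, mul_pow, div_pow, ← pow_mul, ← pow_mul,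
    show m * (4 * p) = 4 * m * p by ring]
  field_simp

theorem niven_poly_key_deriv (s t m p : ℕ) (hs : 0 < s) (ht : 0 < t) (hm : 0 < m) (hp : 0 < p)
    (r : ℝ) (hr : r = (s : ℝ) / (t : ℝ)) (f : ℝ[X])
    (hf : f = C ((t : ℝ) ^ (4 * m * p + 2 * p - 2) / ((2 * p - 2).factorial : ℝ)) *
      X ^ (2 * p - 2) * ∏ k ∈ Finset.Icc 1 m, (X ^ 2 - C ((k : ℝ) ^ 2 * r ^ 2)) ^ (2 * p)) :
    (derivative^[2 * p - 2] f).eval 0 =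
      ((s : ℝ) ^ (4 * m * p) * (t : ℝ) ^ (2 * p - 2) * (m.factorial : ℝ) ^ (4 * p)) :=
  niven_poly_key_deriv_general s t m p ht r hr f hf
end

section
/- Let s, t, m be positive integers, let p be a prime, set r = s/t, and define the polynomial f(x) = t^{4mp+2p−2} · x^{2p−2} · ∏_{k=1}^{m} (x² − k²r²)^{2p} / (2p−2)!. Then: (i) for every natural number j with j ≠ 2p−2, the integer f^{(j)}(0) is divisible by p; (ii) if moreover p > m, p > s, and p > t, then p does not divide the integer f^{(2p−2)}(0). -/
open Polynomial Nat

/-!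
Clearing denominators, `(2p-2)! • f` is the image of the integer polynomial `G(X²) · X^(2p-2)`,
where `G(y) = t^(2p-2) ∏ₖ (t² y - k² s²)^(2p)`. Hence `f⁽ʲ⁾(0) = j!/(2p-2)! · cⱼ` with `cⱼ` the
`j`-th integer coefficient. It vanishes for `j < 2p-2`, and for `j = 2p-1` because `G(X²)` is even;
for `j ≥ 2p` the factor `j!/(2p-2)!` is a multiple of `(2p-1)·2p`. At `j = 2p-2` the value is
`G(0) = t^(2p-2) ∏ₖ (k s)^(4p)`, which is prime to `p` once `p > m, s, t`.
-/

theorem factorial_mul_dvd_factorial_of_lt_of_le {n k j : ℕ} (hnk : n < k) (hkj : k ≤ j) :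
    n ! * k ∣ j ! := by
  obtain ⟨i, rfl⟩ : ∃ i, k = i + 1 := ⟨k - 1, by omega⟩
  calc n ! * (i + 1) ∣ i ! * (i + 1) := mul_dvd_mul_right (factorial_dvd_factorial (by omega)) _
    _ = (i + 1)! := by rw [factorial_succ, mul_comm]
    _ ∣ j ! := factorial_dvd_factorial hkj

namespace Polynomial

theorem eval_zero_iterate_derivative {R : Type*} [Semiring R] (q : R[X]) (j : ℕ) :
    (derivative^[j] q).eval 0 = j ! • q.coeff j := by
  rw [← coeff_zero_eq_eval_zero, coeff_iterate_derivative, zero_add, descFactorial_self]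

theorem eval_zero_iterate_derivative_inv_factorial_mul_map {K : Type*} [Field K] [CharZero K]
    {F : ℤ[X]} {N : ℕ} (hF : ∀ j < N, F.coeff j = 0) (j : ℕ) :
    (derivative^[j] (C ((N ! : K)⁻¹) * F.map (Int.castRingHom K))).eval 0 =
      (((j ! / N ! : ℕ) : ℤ) * F.coeff j : ℤ) := by
  rw [iterate_derivative_C_mul, eval_mul, eval_C, eval_zero_iterate_derivative, coeff_map,
    nsmul_eq_mul]
  rcases lt_or_ge j N with hjN | hNj
  · simp [hF j hjN]
  · have hN : (N ! : K) ≠ 0 := Nat.cast_ne_zero.mpr (factorial_ne_zero N)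
    simp only [eq_intCast, Int.cast_mul, Int.cast_natCast]
    rw [Nat.cast_div (factorial_dvd_factorial hNj) hN]
    field_simp

theorem coeff_expand_two_mul_X_pow_succ {R : Type*} [CommSemiring R] (H : R[X]) (N : ℕ) :
    (expand R 2 H * X ^ N).coeff (N + 1) = 0 := by
  rw [add_comm, coeff_mul_X_pow, coeff_expand two_pos, if_neg (by decide)]

end Polynomial

noncomputable def nivenPolyInSq (s t m p : ℕ) : ℤ[X] :=
  C ((t : ℤ) ^ (2 * p - 2)) *
    ∏ k ∈ Finset.Icc 1 m, (C ((t : ℤ) ^ 2) * X - C ((k : ℤ) ^ 2 * s ^ 2)) ^ (2 * p)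

theorem nivenPolyInSq_coeff_zero (s t m p : ℕ) :
    (nivenPolyInSq s t m p).coeff 0 =
      ((t ^ (2 * p - 2) * ∏ k ∈ Finset.Icc 1 m, (k ^ 2 * s ^ 2) ^ (2 * p) : ℕ) : ℤ) := by
  simp [nivenPolyInSq, coeff_zero_eq_eval_zero, eval_prod, Even.neg_pow (even_two_mul p)]

theorem not_dvd_nivenPolyInSq_coeff_zero {s t m p : ℕ} (hp : p.Prime) (hs : 0 < s) (ht : 0 < t)
    (hpm : m < p) (hps : s < p) (hpt : t < p) : ¬ (p : ℤ) ∣ (nivenPolyInSq s t m p).coeff 0 := by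
  have hcop : ∀ n, 0 < n → n < p → p.Coprime n := fun n hn hnp =>
    coprime_of_lt_prime hn.ne' hnp hp
  rw [nivenPolyInSq_coeff_zero, Int.natCast_dvd_natCast, ← hp.coprime_iff_not_dvd]
  refine ((hcop t ht hpt).pow_right _).mul_right (Nat.Coprime.prod_right fun k hk => ?_)
  obtain ⟨hk1, hkm⟩ := Finset.mem_Icc.mp hk
  exact (((hcop k hk1 (by omega)).pow_right 2).mul_right ((hcop s hs hps).pow_right 2)).pow_right _

theorem map_expand_nivenPolyInSq {s t m p : ℕ} (ht : 0 < t) (hp : 0 < p) {r : ℝ}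
    (hr : r = (s : ℝ) / (t : ℝ)) :
    (expand ℤ 2 (nivenPolyInSq s t m p)).map (Int.castRingHom ℝ) =
      C ((t : ℝ) ^ (4 * m * p + 2 * p - 2)) *
        ∏ k ∈ Finset.Icc 1 m, (X ^ 2 - C ((k : ℝ) ^ 2 * r ^ 2)) ^ (2 * p) := by
  have hfactor : ∀ k : ℕ, C (t : ℝ) ^ 2 * X ^ 2 - C (k : ℝ) ^ 2 * C (s : ℝ) ^ 2 =
      C (t : ℝ) ^ 2 * (X ^ 2 - C (k : ℝ) ^ 2 * C r ^ 2) := by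
    intro k
    simp only [← C_pow, ← C_mul, mul_sub, hr]
    congr 2
    field_simp
  have hexp : 4 * m * p + 2 * p - 2 = 2 * p - 2 + 2 * (2 * p) * m := by
    have : 2 * (2 * p) * m = 4 * m * p := by ring
    omega
  simp only [nivenPolyInSq, Polynomial.map_mul, Polynomial.map_prod, Polynomial.map_pow,
    Polynomial.map_sub, Polynomial.map_C, Polynomial.map_X, map_mul, map_prod, map_pow, map_sub,
    expand_C, expand_X, Int.coe_castRingHom, Int.cast_natCast, hfactor, mul_pow,
    Finset.prod_mul_distrib, Finset.prod_const, card_Icc, add_tsub_cancel_right, ← pow_mul,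
    ← mul_assoc, ← pow_add, hexp]

theorem niven_poly_divisibility_general (s t m : ℕ) (hs : 0 < s) (ht : 0 < t) (p : ℕ) (hp : p.Prime)
    (r : ℝ) (hr : r = (s : ℝ) / (t : ℝ)) (f : ℝ[X])
    (hf : f = C ((t : ℝ) ^ (4 * m * p + 2 * p - 2) / ((2 * p - 2).factorial : ℝ)) *
      X ^ (2 * p - 2) * ∏ k ∈ Finset.Icc 1 m, (X ^ 2 - C ((k : ℝ) ^ 2 * r ^ 2)) ^ (2 * p)) :
    (∀ j : ℕ, j ≠ 2 * p - 2 → ∃ z : ℤ, (derivative^[j] f).eval 0 = (z : ℝ) ∧ (p : ℤ) ∣ z) ∧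
    (p > m → p > s → p > t →
      ∀ z : ℤ, (derivative^[2 * p - 2] f).eval 0 = (z : ℝ) → ¬ (p : ℤ) ∣ z) := by
  set N := 2 * p - 2
  set F : ℤ[X] := expand ℤ 2 (nivenPolyInSq s t m p) * X ^ N
  have hfF : f = C ((N ! : ℝ)⁻¹) * F.map (Int.castRingHom ℝ) := by
    rw [hf, Polynomial.map_mul, map_expand_nivenPolyInSq ht hp.pos hr, Polynomial.map_pow, map_X,
      div_eq_mul_inv, C_mul]
    ring
  have hlow : ∀ j < N, F.coeff j = 0 := fun j hj => by rw [coeff_mul_X_pow', if_neg (by omega)]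
  have hval := eval_zero_iterate_derivative_inv_factorial_mul_map (K := ℝ) hlow
  rw [← hfF] at hval
  refine ⟨fun j hj => ⟨_, hval j, ?_⟩, fun hpm hps hpt z hz => ?_⟩
  · rcases lt_or_ge j N with hjN | hNj
    · simp [hlow j hjN]
    obtain rfl | hj2 : j = N + 1 ∨ N + 2 ≤ j := by omega
    · simp [F, coeff_expand_two_mul_X_pow_succ]
    refine Dvd.dvd.mul_right (Int.natCast_dvd_natCast.mpr ?_) _
    rw [Nat.dvd_div_iff_mul_dvd (factorial_dvd_factorial (by omega))]
    exact (mul_dvd_mul_left (N !) (dvd_mul_left p 2)).trans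
      (factorial_mul_dvd_factorial_of_lt_of_le (by have := hp.two_le; omega) (by omega))
  · have hzF : z = (nivenPolyInSq s t m p).coeff 0 := by
      have := hz.symm.trans (hval N)
      rw [Nat.div_self (factorial_pos N)] at this
      simpa [F, coeff_mul_X_pow', coeff_expand two_pos] using this
    exact hzF ▸ not_dvd_nivenPolyInSq_coeff_zero hp hs ht hpm hps hpt

theorem niven_poly_divisibility (s t m : ℕ) (hs : 0 < s) (ht : 0 < t) (hm : 0 < m) (p : ℕ) (hp : p.Prime)
    (r : ℝ) (hr : r = (s : ℝ) / (t : ℝ)) (f : ℝ[X])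
    (hf : f = C ((t : ℝ) ^ (4 * m * p + 2 * p - 2) / ((2 * p - 2).factorial : ℝ)) *
      X ^ (2 * p - 2) * ∏ k ∈ Finset.Icc 1 m, (X ^ 2 - C ((k : ℝ) ^ 2 * r ^ 2)) ^ (2 * p)) :
    (∀ j : ℕ, j ≠ 2 * p - 2 → ∃ z : ℤ, (derivative^[j] f).eval 0 = (z : ℝ) ∧ (p : ℤ) ∣ z) ∧
    (p > m → p > s → p > t →
      ∀ z : ℤ, (derivative^[2 * p - 2] f).eval 0 = (z : ℝ) → ¬ (p : ℤ) ∣ z) :=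
  niven_poly_divisibility_general s t m hs ht p hp r hr f hf
end

section
/- Let s, t, m be positive integers, let p be a prime, set r = s/t, and define the polynomial f(x) = t^{4mp+2p−2} · x^{2p−2} · ∏_{k=1}^{m} (x² − k²r²)^{2p} / (2p−2)!. Then for every integer j with 1 ≤ j ≤ m and every natural number k, the value f^{(k)}(j·r) of the k-th derivative of f at j·r is an integer divisible by p. -/
/-!
Write `r = s / t`. Rescaling by `t` turns `f` into `G(t x) / (2p-2)!` for the integer polynomial
`G = X^(2p-2) ∏ (X² - (k s)²)^(2p)`, so `f⁽ᵏ⁾(j r) = t^k G⁽ᵏ⁾(j s) / (2p-2)!`. Since `j s` is a root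
of `G` of multiplicity at least `2p`, the Taylor expansion of `G` at `j s` shows that `G⁽ᵏ⁾(j s)` is
divisible by `(2p)! = 2p (2p-1) (2p-2)!`, which leaves a factor `p` after dividing by `(2p-2)!`.
-/

open Polynomial Nat

namespace Polynomial

theorem iterate_derivative_comp_C_mul_X {R : Type*} [CommSemiring R] (q : R[X]) (c : R) (k : ℕ) :
    derivative^[k] (q.comp (C c * X)) = C (c ^ k) * (derivative^[k] q).comp (C c * X) := by
  induction k with
  | zero => simp
  | succ n ih =>
    rw [Function.iterate_succ_apply', ih, derivative_C_mul, derivative_comp,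
      Function.iterate_succ_apply']
    simp only [derivative_mul, derivative_C, derivative_X, zero_mul, mul_one, zero_add,
      pow_succ, C_mul]
    ring

theorem factorial_dvd_eval_iterate_derivative {R : Type*} [CommRing R] {G : R[X]} {a : R}
    {n : ℕ} (h : (X - C a) ^ n ∣ G) (k : ℕ) : (n ! : R) ∣ (derivative^[k] G).eval a := by
  obtain ⟨H, rfl⟩ := h
  have htaylor : taylor a ((X - C a) ^ n * H) = X ^ n * taylor a H := by
    simp [taylor_apply, sub_comp]
  have heval : (derivative^[k] ((X - C a) ^ n * H)).eval a
      = k ! * if n ≤ k then (taylor a H).coeff (k - n) else 0 := by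
    rw [← factorial_smul_hasseDeriv, LinearMap.smul_apply, eval_smul, ← taylor_coeff, htaylor,
      mul_comm (X ^ n), coeff_mul_X_pow', nsmul_eq_mul]
  rw [heval]
  split_ifs with hnk
  · exact Dvd.dvd.mul_right (Nat.cast_dvd_cast (factorial_dvd_factorial hnk)) _
  · simp

end Polynomial

theorem mul_factorial_two_mul_sub_two_dvd_factorial {p : ℕ} (hp : 0 < p) :
    p * (2 * p - 2)! ∣ (2 * p)! := by
  rw [← factorial_mul_descFactorial (show 2 ≤ 2 * p by omega), mul_comm p]
  refine mul_dvd_mul_left _ ⟨2 * (2 * p - 1), ?_⟩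
  rw [descFactorial_succ, descFactorial_one]
  ring

noncomputable def nivenPoly (R : Type*) [CommRing R] (s m p : ℕ) : R[X] :=
  X ^ (2 * p - 2) * ∏ i ∈ Finset.Icc 1 m, (X ^ 2 - ((i * s : ℕ) : R[X]) ^ 2) ^ (2 * p)

theorem map_nivenPoly {R S : Type*} [CommRing R] [CommRing S] (g : R →+* S) (s m p : ℕ) :
    (nivenPoly R s m p).map g = nivenPoly S s m p := by
  simp [nivenPoly, Polynomial.map_prod]

theorem X_sub_C_pow_dvd_nivenPoly (R : Type*) [CommRing R] {s m p j : ℕ} (hj : j ∈ Finset.Icc 1 m) :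
    (X - C ((j * s : ℕ) : R)) ^ (2 * p) ∣ nivenPoly R s m p := by
  refine Dvd.dvd.mul_left (dvd_trans (pow_dvd_pow_of_dvd ⟨X + C ((j * s : ℕ) : R), ?_⟩ _)
    (Finset.dvd_prod_of_mem _ hj)) _
  rw [C_eq_natCast]
  ring

theorem nivenPoly_comp_C_mul_X {K : Type*} [CommRing K] (s m p : ℕ) {r t : K} (hrt : r * t = s) :
    (nivenPoly K s m p).comp (C t * X) =
      C (t ^ (4 * m * p + 2 * p - 2)) * X ^ (2 * p - 2) *
        ∏ k ∈ Finset.Icc 1 m, (X ^ 2 - C ((k : K) ^ 2 * r ^ 2)) ^ (2 * p) := by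
  have hfactor (k : ℕ) : ((C t * X) ^ 2 - ((k * s : ℕ) : K[X]) ^ 2) ^ (2 * p)
      = C (t ^ (4 * p)) * (X ^ 2 - C ((k : K) ^ 2 * r ^ 2)) ^ (2 * p) := by
    have hsq : (C t * X) ^ 2 - ((k * s : ℕ) : K[X]) ^ 2
        = C (t ^ 2) * (X ^ 2 - C ((k : K) ^ 2 * r ^ 2)) := by
      rw [← C_eq_natCast, Nat.cast_mul, ← hrt]
      simp only [C_mul, C_pow]
      ring
    rw [hsq, mul_pow, ← C_pow, ← pow_mul, show 2 * (2 * p) = 4 * p by ring]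
  have hexp : 4 * m * p + 2 * p - 2 = (2 * p - 2) + 4 * p * m := by
    rcases p.eq_zero_or_pos with rfl | hp
    · simp
    · rw [show 4 * m * p = 4 * (m * p) by ring, show 4 * p * m = 4 * (m * p) by ring]
      omega
  simp only [nivenPoly, mul_comp, pow_comp, prod_comp, sub_comp, X_comp, natCast_comp, hfactor,
    Finset.prod_mul_distrib, Finset.prod_const, card_Icc, add_tsub_cancel_right]
  rw [hexp, pow_add, pow_mul]
  simp only [C_mul, C_pow]
  ring

theorem niven_poly_deriv_at_jr_general (s t m : ℕ) (ht : 0 < t) (p : ℕ) (hp : p.Prime)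
    (r : ℝ) (hr : r = (s : ℝ) / (t : ℝ)) (f : ℝ[X])
    (hf : f = C ((t : ℝ) ^ (4 * m * p + 2 * p - 2) / ((2 * p - 2).factorial : ℝ)) *
      X ^ (2 * p - 2) * ∏ k ∈ Finset.Icc 1 m, (X ^ 2 - C ((k : ℝ) ^ 2 * r ^ 2)) ^ (2 * p)) :
    ∀ j : ℤ, 1 ≤ j → j ≤ (m : ℤ) → ∀ k : ℕ,
      ∃ z : ℤ, (derivative^[k] f).eval ((j : ℝ) * r) = (z : ℝ) ∧ (p : ℤ) ∣ z := by
  intro j hj1 hjm k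
  lift j to ℕ using by omega
  have ht0 : (t : ℝ) ≠ 0 := Nat.cast_ne_zero.2 ht.ne'
  have hrt : r * t = s := by rw [hr, div_mul_cancel₀ _ ht0]
  set G := nivenPoly ℤ s m p
  have hfG : f = C ((2 * p - 2)! : ℝ)⁻¹ * (G.map (Int.castRingHom ℝ)).comp (C (t : ℝ) * X) := by
    rw [hf, map_nivenPoly, nivenPoly_comp_C_mul_X s m p hrt, div_eq_mul_inv, C_mul]
    ring
  obtain ⟨c, hc⟩ : ((2 * p)! : ℤ) ∣ (derivative^[k] G).eval ((j * s : ℕ) : ℤ) :=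
    factorial_dvd_eval_iterate_derivative
      (X_sub_C_pow_dvd_nivenPoly ℤ (Finset.mem_Icc.2 ⟨by omega, by omega⟩)) k
  obtain ⟨d, hd⟩ := mul_factorial_two_mul_sub_two_dvd_factorial hp.pos
  refine ⟨t ^ k * (p * d * c), ?_, ⟨t ^ k * (d * c), by ring⟩⟩
  have htj : (t : ℝ) * ((j : ℤ) * r) = ((j * s : ℕ) : ℤ) := by push_cast; rw [← hrt]; ring
  rw [hfG, iterate_derivative_C_mul, iterate_derivative_comp_C_mul_X, iterate_derivative_map,
    eval_mul, eval_C, eval_mul, eval_C, eval_comp, eval_mul, eval_C, eval_X, htj,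
    eval_intCast_map, Int.cast_id, eq_intCast, hc, hd]
  push_cast
  field_simp

theorem niven_poly_deriv_at_jr (s t m : ℕ) (hs : 0 < s) (ht : 0 < t) (hm : 0 < m) (p : ℕ) (hp : p.Prime)
    (r : ℝ) (hr : r = (s : ℝ) / (t : ℝ)) (f : ℝ[X])
    (hf : f = C ((t : ℝ) ^ (4 * m * p + 2 * p - 2) / ((2 * p - 2).factorial : ℝ)) *
      X ^ (2 * p - 2) * ∏ k ∈ Finset.Icc 1 m, (X ^ 2 - C ((k : ℝ) ^ 2 * r ^ 2)) ^ (2 * p)) :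
    ∀ j : ℤ, 1 ≤ j → j ≤ (m : ℤ) → ∀ k : ℕ,
      ∃ z : ℤ, (derivative^[k] f).eval ((j : ℝ) * r) = (z : ℝ) ∧ (p : ℤ) ∣ z :=
  niven_poly_deriv_at_jr_general s t m ht p hp r hr f hf
end
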